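/- arXiv:1005.4348 — 2 statements merged into one kernel-verified Lean document; each statement's English description precedes it below -/
import Mathlib

section
/- Let ρ be a d_A·d_B × d_A·d_B complex matrix such that ρ = Σ_{i=1}^{d_B} R_i ⊗ (b_i b_i†) for some orthonormal basis b_1, …, b_{d_B} of ℂ^{d_B} and positive semidefinite d_A × d_A matrices R_i, and also ρ = Σ_{j=1}^{d_A} (a_j a_j†) ⊗ S_j for some orthonormal basis a_1, …, a_{d_A} of ℂ^{d_A} and positive semidefinite d_B × d_B matrices S_j. Then there exist nonnegative real numbers c_{j i} such that ρ = Σ_{j=1}^{d_A} Σ_{i=1}^{d_B} c_{j i} · (a_j ⊗ b_i)(a_j ⊗ b_i)†. -/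
/-!
Compress ρ on the first factor by `a j`, i.e. form `(a j† ⊗ 1) ρ (a j ⊗ 1)`. By orthonormality
of the `a j`, the first decomposition of ρ shows that this is `S j`; the second shows that it is
`∑ i, ⟨a j, R i a j⟩ • b i b i†`. Substituting this expression for `S j` back into
`ρ = ∑ j, a j a j† ⊗ S j` gives the claim with `c j i = ⟨a j, R i a j⟩ ≥ 0`.
-/

open Matrix
open scoped Kronecker ComplexOrder

/-- The outer product `v v†` of a vector with itself. -/
def outer {n : Type*} (v : n → ℂ) : Matrix n n ℂ :=
  Matrix.vecMulVec v (star v)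

/-- The Kronecker (tensor) product of two vectors. -/
def kronVec {m n : Type*} (u : m → ℂ) (v : n → ℂ) : m × n → ℂ :=
  fun p => u p.1 * v p.2

namespace Matrix

variable {m n R : Type*} [Fintype m] [CommSemiring R] [StarRing R]

/-- `compressLeft v M = (v† ⊗ 1) M (v ⊗ 1)`. -/
def compressLeft (v : m → R) : Matrix (m × n) (m × n) R →ₗ[R] Matrix n n R where
  toFun M := of fun q s => ∑ p, ∑ r, star (v p) * M (p, q) (r, s) * v r
  map_add' M N := by
    ext q s
    simp only [of_apply, add_apply, mul_add, add_mul, Finset.sum_add_distrib]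
  map_smul' c M := by
    ext q s
    simp only [of_apply, smul_apply, smul_eq_mul, Finset.mul_sum, RingHom.id_apply]
    exact Finset.sum_congr rfl fun _ _ => Finset.sum_congr rfl fun _ _ => by ring

theorem compressLeft_kronecker (v : m → R) (A : Matrix m m R) (B : Matrix n n R) :
    compressLeft v (A ⊗ₖ B) = (star v ⬝ᵥ (A *ᵥ v)) • B := by
  ext q s
  simp only [compressLeft, LinearMap.coe_mk, AddHom.coe_mk, of_apply, kroneckerMap_apply,
    smul_apply, smul_eq_mul, dotProduct, mulVec, Pi.star_apply, Finset.mul_sum, Finset.sum_mul]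
  exact Finset.sum_congr rfl fun _ _ => Finset.sum_congr rfl fun _ _ => by ring

end Matrix

theorem star_dotProduct_outer_mulVec {n : Type*} [Fintype n] (u v w : n → ℂ) :
    star v ⬝ᵥ (outer u *ᵥ w) = (star v ⬝ᵥ u) * (star u ⬝ᵥ w) := by
  rw [outer, vecMulVec_mulVec, dotProduct_smul]
  simp [mul_comm]

theorem outer_kronVec {m n : Type*} (u : m → ℂ) (v : n → ℂ) :
    outer (kronVec u v) = outer u ⊗ₖ outer v := by
  ext ⟨p, q⟩ ⟨r, s⟩
  simp only [outer, kronVec, vecMulVec_apply, kronecker_apply, Pi.star_apply, star_mul']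
  ring

theorem compressLeft_sum_outer_kronecker {ι m n : Type*} [Fintype ι] [DecidableEq ι]
    [Fintype m] (a : ι → m → ℂ)
    (ha : ∀ j k, star (a j) ⬝ᵥ a k = if j = k then 1 else 0)
    (S : ι → Matrix n n ℂ) (j : ι) :
    compressLeft (a j) (∑ k, outer (a k) ⊗ₖ S k) = S j := by
  simp [map_sum, compressLeft_kronecker, star_dotProduct_outer_mulVec, ha]

theorem classical_both_parties_is_fully_classical_general
    {dA dB : ℕ}
    (ρ : Matrix (Fin dA × Fin dB) (Fin dA × Fin dB) ℂ)
    (b : Fin dB → (Fin dB → ℂ))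
    (R : Fin dB → Matrix (Fin dA) (Fin dA) ℂ) (hR : ∀ i, (R i).PosSemidef)
    (hB : ρ = ∑ i, R i ⊗ₖ outer (b i))
    (a : Fin dA → (Fin dA → ℂ))
    (ha : ∀ j k, star (a j) ⬝ᵥ a k = if j = k then 1 else 0)
    (S : Fin dA → Matrix (Fin dB) (Fin dB) ℂ)
    (hA : ρ = ∑ j, outer (a j) ⊗ₖ S j) :
    ∃ c : Fin dA → Fin dB → ℝ, (∀ j i, 0 ≤ c j i) ∧
      ρ = ∑ j, ∑ i, (c j i : ℂ) • outer (kronVec (a j) (b i)) := by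
  set c : Fin dA → Fin dB → ℂ := fun j i => star (a j) ⬝ᵥ (R i *ᵥ a j)
  have hc : ∀ j i, 0 ≤ c j i := fun j i => (hR i).dotProduct_mulVec_nonneg (a j)
  have hS_eq : ∀ j, S j = ∑ i, c j i • outer (b i) := fun j => by
    rw [← compressLeft_sum_outer_kronecker a ha S j, ← hA, hB, map_sum]
    simp only [compressLeft_kronecker, c]
  refine ⟨fun j i => (c j i).re, fun j i => (Complex.nonneg_iff.mp (hc j i)).1, ?_⟩
  rw [hA]
  refine Finset.sum_congr rfl fun j _ => ?_
  simp only [← Complex.eq_re_of_ofReal_le (hc _ _), outer_kronVec, ← kronecker_smul, hS_eq j]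
  exact map_sum (kroneckerBilinear (R := ℂ) (outer (a j))) _ _

/-- Lemma 2, bipartite classical case: a state that is classical for both
parties is fully classical, i.e. diagonal in an orthonormal product basis. -/
theorem classical_both_parties_is_fully_classical
    {dA dB : ℕ}
    (ρ : Matrix (Fin dA × Fin dB) (Fin dA × Fin dB) ℂ)
    (b : Fin dB → (Fin dB → ℂ))
    (hb : ∀ i j, star (b i) ⬝ᵥ b j = if i = j then 1 else 0)
    (R : Fin dB → Matrix (Fin dA) (Fin dA) ℂ) (hR : ∀ i, (R i).PosSemidef)
    (hB : ρ = ∑ i, R i ⊗ₖ outer (b i))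
    (a : Fin dA → (Fin dA → ℂ))
    (ha : ∀ j k, star (a j) ⬝ᵥ a k = if j = k then 1 else 0)
    (S : Fin dA → Matrix (Fin dB) (Fin dB) ℂ) (hS : ∀ j, (S j).PosSemidef)
    (hA : ρ = ∑ j, outer (a j) ⊗ₖ S j) :
    ∃ c : Fin dA → Fin dB → ℝ, (∀ j i, 0 ≤ c j i) ∧
      ρ = ∑ j, ∑ i, (c j i : ℂ) • outer (kronVec (a j) (b i)) :=
  classical_both_parties_is_fully_classical_general ρ b R hR hB a ha S hA
end

section
/- Let b_1, …, b_n be unit vectors in ℂ^d. Then the following are equivalent: (1) the vectors b_1, …, b_n are orthonormal; (2) there exist d × d complex matrices M_1, …, M_n such that I − Σ_{i=1}^n M_i† M_i is positive semidefinite and M_i (b_j b_j†) M_i† = δ_{ij} · (b_j b_j†) for all i, j. -/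
/-!
If the `b i` are orthonormal, the rank-one projections `M i = b i b i†` work: their sum `P` is an
orthogonal projection, hence so is `1 - P`, which is therefore positive semidefinite.

Conversely, `M i (b j b j†) M i† = (M i b j)(M i b j)†`, so `M i b j = 0` for `i ≠ j` and
`‖M j b j‖ = ‖b j‖`. Thus `b j† (1 - ∑ M k† M k) b j = 0`, and positivity forces
`M j† M j b j = ∑ M k† M k b j = b j`. Hence `⟪b i, b j⟫ = ⟪M j b i, M j b j⟫ = 0` for `i ≠ j`.
-/

open Matrix
open scoped ComplexOrder

namespace Matrix

variable {𝕜 ι m n : Type*} [RCLike 𝕜] [Fintype m]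

theorem IsStarProjection.posSemidef {P : Matrix m m 𝕜} (hP : IsStarProjection P) :
    P.PosSemidef := by
  have hPP : Pᴴ * P = P := by
    rw [← star_eq_conjTranspose, hP.isSelfAdjoint.star_eq, hP.isIdempotentElem.eq]
  simpa only [hPP] using posSemidef_conjTranspose_mul_self P

theorem PosSemidef.mulVec_eq_self_of_one_sub [DecidableEq m] {S : Matrix m m 𝕜}
    (hS : (1 - S).PosSemidef) {v : m → 𝕜} (hv : star v ⬝ᵥ (S *ᵥ v) = star v ⬝ᵥ v) :
    S *ᵥ v = v := by
  have h := (hS.dotProduct_mulVec_zero_iff v).1 <| by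
    rw [sub_mulVec, one_mulVec, dotProduct_sub, hv, sub_self]
  rw [sub_mulVec, one_mulVec, sub_eq_zero] at h
  exact h.symm

theorem star_dotProduct_conjTranspose_mulVec [Fintype n] (A : Matrix m n 𝕜) (x : n → 𝕜)
    (y : m → 𝕜) :
    star x ⬝ᵥ (Aᴴ *ᵥ y) = star (A *ᵥ x) ⬝ᵥ y := by
  rw [dotProduct_mulVec, star_mulVec]

theorem sum_conjTranspose_mul_mulVec_of_mulVec_eq_zero [Fintype ι] [Fintype n]
    {M : ι → Matrix m n 𝕜} {v : n → 𝕜} (j : ι) (hv : ∀ k, k ≠ j → M k *ᵥ v = 0) :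
    (∑ k, (M k)ᴴ * M k) *ᵥ v = (M j)ᴴ *ᵥ (M j *ᵥ v) := by
  rw [sum_mulVec, Finset.sum_eq_single j (fun k _ hk => by rw [← mulVec_mulVec, hv k hk,
    mulVec_zero]) (fun hj => absurd (Finset.mem_univ j) hj), mulVec_mulVec]

end Matrix

section Outer

variable {m : Type*}

theorem outer_conjTranspose (v : m → ℂ) : (outer v)ᴴ = outer v := by
  rw [outer, conjTranspose_vecMulVec, star_star]

theorem trace_outer [Fintype m] (v : m → ℂ) : (outer v).trace = star v ⬝ᵥ v := by
  rw [outer, trace_vecMulVec, dotProduct_comm]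

theorem outer_eq_zero_iff [Fintype m] {v : m → ℂ} : outer v = 0 ↔ v = 0 := by
  refine ⟨fun h => dotProduct_star_self_eq_zero.1 ?_, fun h => by simp [outer, h]⟩
  rw [← trace_outer, h, trace_zero]

theorem mul_outer_mul_conjTranspose [Fintype m] {l : Type*} (M : Matrix l m ℂ) (v : m → ℂ) :
    M * outer v * Mᴴ = outer (M *ᵥ v) := by
  rw [outer, mul_vecMulVec, vecMulVec_mul, ← star_mulVec, outer]

theorem outer_mul_outer [Fintype m] (v w : m → ℂ) :
    outer v * outer w = (star v ⬝ᵥ w) • vecMulVec v (star w) := by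
  rw [outer, outer, vecMulVec_mul_vecMulVec, vecMulVec_smul]

end Outer

section Orthonormal

variable {ι m : Type*} [Fintype m] [DecidableEq ι] {b : ι → m → ℂ}

theorem outer_mul_outer_of_orthonormal
    (hb : ∀ i j, star (b i) ⬝ᵥ b j = if i = j then 1 else 0) (i j : ι) :
    outer (b i) * outer (b j) = if i = j then outer (b i) else 0 := by
  rw [outer_mul_outer, hb]
  split_ifs with hij
  · rw [hij, one_smul, outer]
  · rw [zero_smul]

theorem isStarProjection_sum_outer_of_orthonormal [Fintype ι]
    (hb : ∀ i j, star (b i) ⬝ᵥ b j = if i = j then 1 else 0) :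
    IsStarProjection (∑ i, outer (b i)) where
  isIdempotentElem := by
    rw [IsIdempotentElem, Finset.sum_mul_sum]
    simp only [outer_mul_outer_of_orthonormal hb, Finset.sum_ite_eq, Finset.mem_univ, if_true]
  isSelfAdjoint := by
    rw [IsSelfAdjoint, star_eq_conjTranspose, conjTranspose_sum]
    simp only [outer_conjTranspose]

theorem posSemidef_one_sub_sum_outer_of_orthonormal [Fintype ι] [DecidableEq m]
    (hb : ∀ i j, star (b i) ⬝ᵥ b j = if i = j then 1 else 0) :
    (1 - ∑ i, (outer (b i))ᴴ * outer (b i)).PosSemidef := by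
  simp only [outer_conjTranspose, outer_mul_outer_of_orthonormal hb, if_pos]
  exact (isStarProjection_sum_outer_of_orthonormal hb).one_sub.posSemidef

theorem outer_mul_outer_mul_conjTranspose_of_orthonormal
    (hb : ∀ i j, star (b i) ⬝ᵥ b j = if i = j then 1 else 0) (i j : ι) :
    outer (b i) * outer (b j) * (outer (b i))ᴴ = (if i = j then (1 : ℂ) else 0) • outer (b j) := by
  rw [outer_conjTranspose, outer_mul_outer_of_orthonormal hb]
  split_ifs with hij
  · rw [hij, outer_mul_outer_of_orthonormal hb, if_pos rfl, one_smul]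
  · rw [zero_mul, zero_smul]

theorem orthonormal_of_posSemidef_of_mul_outer_mul_conjTranspose [Fintype ι] [DecidableEq m]
    (hunit : ∀ i, star (b i) ⬝ᵥ b i = 1) {M : ι → Matrix m m ℂ}
    (hP : (1 - ∑ i, (M i)ᴴ * M i).PosSemidef)
    (hM : ∀ i j, M i * outer (b j) * (M i)ᴴ = (if i = j then (1 : ℂ) else 0) • outer (b j))
    (i j : ι) : star (b i) ⬝ᵥ b j = if i = j then 1 else 0 := by
  simp only [mul_outer_mul_conjTranspose] at hM
  have hoff : ∀ i j, i ≠ j → M i *ᵥ b j = 0 := fun i j hij =>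
    outer_eq_zero_iff.1 (by rw [hM, if_neg hij, zero_smul])
  have hsum : ∀ j, (∑ k, (M k)ᴴ * M k) *ᵥ b j = (M j)ᴴ *ᵥ (M j *ᵥ b j) := fun j =>
    sum_conjTranspose_mul_mulVec_of_mulVec_eq_zero j fun k hk => hoff k j hk
  have hfix : ∀ j, (M j)ᴴ *ᵥ (M j *ᵥ b j) = b j := fun j => by
    rw [← hsum]
    refine hP.mulVec_eq_self_of_one_sub ?_
    rw [hsum, star_dotProduct_conjTranspose_mulVec, ← trace_outer, hM, if_pos rfl, one_smul,
      trace_outer]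
  split_ifs with hij
  · rw [hij, hunit]
  · calc star (b i) ⬝ᵥ b j = star (b i) ⬝ᵥ ((M j)ᴴ *ᵥ (M j *ᵥ b j)) := by rw [hfix]
      _ = 0 := by
        rw [star_dotProduct_conjTranspose_mulVec, hoff j i (Ne.symm hij), star_zero,
          zero_dotProduct]

end Orthonormal

/-- NDLID with unit success rate: unit vectors `b_1, …, b_n` admit a
generalized measurement unambiguously discriminating them with success rate
`λ = 1` iff they are orthonormal. -/
theorem NDLID_unit_rate_iff_orthonormal
    {d n : ℕ} (b : Fin n → (Fin d → ℂ))
    (hunit : ∀ i, star (b i) ⬝ᵥ b i = 1) :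
    (∀ i j, star (b i) ⬝ᵥ b j = if i = j then 1 else 0) ↔
    (∃ M : Fin n → Matrix (Fin d) (Fin d) ℂ,
      ((1 : Matrix (Fin d) (Fin d) ℂ) - ∑ i, (M i)ᴴ * M i).PosSemidef ∧
      ∀ i j, M i * outer (b j) * (M i)ᴴ =
        (if i = j then (1 : ℂ) else 0) • outer (b j)) :=
  ⟨fun hb => ⟨fun i => outer (b i), posSemidef_one_sub_sum_outer_of_orthonormal hb,
      outer_mul_outer_mul_conjTranspose_of_orthonormal hb⟩,
    fun ⟨_, hP, hM⟩ => orthonormal_of_posSemidef_of_mul_outer_mul_conjTranspose hunit hP hM⟩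
end
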